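/- Let Γ = (V,E,c) be a finite connected network with Laplacian L defined by L(u)(x) = Σ_{y∈V} c(x,y)(u(x) − u(y)). Let q ∈ C(V), ω a weight (positive function with Σ ω(x)² = 1), and q_ω = −L(ω)/ω. Then the Schrödinger operator L_q(u) = L(u) + qu is (λ,ω)-elliptic (positive semi-definite with simple lowest eigenvalue λ and eigenfunction ω) if and only if q = q_ω + λ for some λ ≥ 0. -/

import Mathlib

open Finset

noncomputable def ip {V : Type*} [Fintype V] (u v : V → ℝ) : ℝ := ∑ x, u x * v x

/-- The Laplacian of a network with conductance `c`. -/
noncomputable def lap {V : Type*} [Fintype V] (c : V → V → ℝ) (u : V → ℝ) : V → ℝ :=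
  fun x => ∑ y, c x y * (u x - u y)

/-!
Writing `u = ω f`, the ground state transform gives
`⟨L_{q_ω + λ} u, u⟩ = ½ ∑ c(x,y) ω(x) ω(y) (f(x) - f(y))² + λ ‖u‖²`.
Hence `L_{q_ω + λ}` is positive semi-definite once `λ ≥ 0`, its eigenvalues are at least `λ`,
and a `λ`-eigenfunction has vanishing energy, so `f` is constant on the connected network.
Conversely `L_q ω = λ ω` forces `q = q_ω + λ` since `ω` does not vanish,
and `0 ≤ ⟨L_q ω, ω⟩ = λ`.
-/

section

variable {V : Type*} [Fintype V]

theorem sum_sum_eq_half_sum_sum_add_swap (F : V → V → ℝ) :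
    ∑ x, ∑ y, F x y = (1 / 2) * ∑ x, ∑ y, (F x y + F y x) := by
  simp only [sum_add_distrib]
  rw [sum_comm (f := fun x y => F y x)]
  ring

theorem ip_comm (u v : V → ℝ) : ip u v = ip v u := by
  simp only [ip, mul_comm]

theorem ip_add_left (u v w : V → ℝ) : ip (u + v) w = ip u w + ip v w := by
  simp only [ip, Pi.add_apply, add_mul, sum_add_distrib]

theorem ip_smul_left (a : ℝ) (u v : V → ℝ) : ip (a • u) v = a * ip u v := by
  simp only [ip, Pi.smul_apply, smul_eq_mul, mul_sum, mul_assoc]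

theorem ip_self_nonneg (u : V → ℝ) : 0 ≤ ip u u :=
  sum_nonneg fun x _ => mul_self_nonneg (u x)

theorem ip_self_pos {u : V → ℝ} (hu : u ≠ 0) : 0 < ip u u := by
  obtain ⟨x, hx⟩ := Function.ne_iff.mp hu
  exact sum_pos' (fun y _ => mul_self_nonneg (u y)) ⟨x, mem_univ x, mul_self_pos.mpr hx⟩

variable {c : V → V → ℝ}

noncomputable def schrodinger (c : V → V → ℝ) (q u : V → ℝ) : V → ℝ :=
  fun x => lap c u x + q x * u x

noncomputable def groundPotential (c : V → V → ℝ) (ω : V → ℝ) : V → ℝ :=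
  fun x => -(lap c ω x) / ω x

noncomputable def weightedEnergy (c : V → V → ℝ) (ω f : V → ℝ) : ℝ :=
  ∑ x, ∑ y, c x y * ω x * ω y * (f x - f y) ^ 2

theorem ip_lap_eq (hc : ∀ x y, c x y = c y x) (u v : V → ℝ) :
    ip (lap c u) v = (1 / 2) * ∑ x, ∑ y, c x y * (u x - u y) * (v x - v y) := by
  rw [show ip (lap c u) v = ∑ x, ∑ y, c x y * (u x - u y) * v x by simp only [ip, lap, sum_mul],
    sum_sum_eq_half_sum_sum_add_swap]
  congr 1
  refine sum_congr rfl fun x _ => sum_congr rfl fun y _ => ?_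
  rw [hc y x]
  ring

theorem ip_lap_comm (hc : ∀ x y, c x y = c y x) (u v : V → ℝ) :
    ip (lap c u) v = ip u (lap c v) := by
  rw [ip_comm u, ip_lap_eq hc, ip_lap_eq hc]
  congr 1
  exact sum_congr rfl fun x _ => sum_congr rfl fun y _ => by ring

theorem ip_schrodinger_comm (hc : ∀ x y, c x y = c y x) (q u v : V → ℝ) :
    ip (schrodinger c q u) v = ip u (schrodinger c q v) := by
  have h := ip_lap_comm hc u v
  simp only [ip] at h ⊢
  simp only [schrodinger, add_mul, mul_add, sum_add_distrib, h]
  congr 1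
  exact sum_congr rfl fun x _ => by ring

theorem schrodinger_add_const (q u : V → ℝ) (lam : ℝ) :
    schrodinger c (fun x => q x + lam) u = schrodinger c q u + lam • u := by
  funext x
  simp only [schrodinger, Pi.add_apply, Pi.smul_apply, smul_eq_mul]
  ring

theorem schrodinger_eq_smul_iff {ω q : V → ℝ} {lam : ℝ} (hω : ∀ x, ω x ≠ 0) :
    schrodinger c q ω = lam • ω ↔ q = fun x => groundPotential c ω x + lam := by
  simp only [funext_iff, schrodinger, groundPotential, Pi.smul_apply, smul_eq_mul]
  refine forall_congr' fun x => ?_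
  rw [div_add' _ _ _ (hω x), eq_div_iff (hω x)]
  constructor <;> intro h <;> linarith

/-- The ground state transform. -/
theorem schrodinger_groundPotential_mul {ω : V → ℝ} (hω : ∀ x, ω x ≠ 0) (f : V → ℝ) (x : V) :
    schrodinger c (groundPotential c ω) (ω * f) x = ∑ y, c x y * ω y * (f x - f y) := by
  have hpot : groundPotential c ω x * (ω x * f x) = -(lap c ω x * f x) := by
    simp only [groundPotential]
    field_simp [hω x]
  simp only [schrodinger, Pi.mul_apply, hpot]
  simp only [lap, Pi.mul_apply, sum_mul, ← sum_neg_distrib, ← sum_add_distrib]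
  exact sum_congr rfl fun y _ => by ring

theorem ip_schrodinger_groundPotential_self (hc : ∀ x y, c x y = c y x) {ω : V → ℝ}
    (hω : ∀ x, ω x ≠ 0) (u : V → ℝ) :
    ip (schrodinger c (groundPotential c ω) u) u = (1 / 2) * weightedEnergy c ω (u / ω) := by
  have hu : u = ω * (u / ω) := funext fun x => (mul_div_cancel₀ (u x) (hω x)).symm
  conv_lhs => rw [hu]
  simp only [ip, schrodinger_groundPotential_mul hω, sum_mul, Pi.mul_apply]
  rw [sum_sum_eq_half_sum_sum_add_swap, weightedEnergy]
  congr 1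
  refine sum_congr rfl fun x _ => sum_congr rfl fun y _ => ?_
  rw [hc y x]
  ring

theorem ip_schrodinger_groundPotential_add_self (hc : ∀ x y, c x y = c y x) {ω : V → ℝ}
    (hω : ∀ x, ω x ≠ 0) (lam : ℝ) (u : V → ℝ) :
    ip (schrodinger c (fun x => groundPotential c ω x + lam) u) u
      = (1 / 2) * weightedEnergy c ω (u / ω) + lam * ip u u := by
  rw [schrodinger_add_const, ip_add_left, ip_smul_left, ip_schrodinger_groundPotential_self hc hω]

theorem weightedEnergy_eq_of_schrodinger_eq_smul (hc : ∀ x y, c x y = c y x) {ω u : V → ℝ}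
    (hω : ∀ x, ω x ≠ 0) {lam μ : ℝ}
    (h : schrodinger c (fun x => groundPotential c ω x + lam) u = μ • u) :
    (1 / 2) * weightedEnergy c ω (u / ω) = (μ - lam) * ip u u := by
  have hip := ip_schrodinger_groundPotential_add_self hc hω lam u
  rw [h, ip_smul_left] at hip
  linarith

theorem weightedEnergy_nonneg (hc : ∀ x y, 0 ≤ c x y) {ω : V → ℝ} (hω : ∀ x, 0 ≤ ω x)
    (f : V → ℝ) : 0 ≤ weightedEnergy c ω f :=
  sum_nonneg fun x _ => sum_nonneg fun y _ =>
    mul_nonneg (mul_nonneg (mul_nonneg (hc x y) (hω x)) (hω y)) (sq_nonneg _)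

theorem eq_of_weightedEnergy_eq_zero (hc : ∀ x y, 0 ≤ c x y) {ω f : V → ℝ}
    (hω : ∀ x, 0 < ω x) (h0 : weightedEnergy c ω f = 0) {x y : V} (hxy : 0 < c x y) :
    f x = f y := by
  have hterm_nonneg : ∀ a b, 0 ≤ c a b * ω a * ω b * (f a - f b) ^ 2 := fun a b =>
    mul_nonneg (mul_nonneg (mul_nonneg (hc a b) (hω a).le) (hω b).le) (sq_nonneg _)
  have hrow := (sum_eq_zero_iff_of_nonneg fun a _ => sum_nonneg fun b _ => hterm_nonneg a b).mp
    h0 x (mem_univ x)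
  have hterm := (sum_eq_zero_iff_of_nonneg fun b _ => hterm_nonneg x b).mp hrow y (mem_univ y)
  have hweight : c x y * ω x * ω y ≠ 0 := (mul_pos (mul_pos hxy (hω x)) (hω y)).ne'
  simpa [hweight, sub_eq_zero] using hterm

theorem exists_eq_smul_of_weightedEnergy_eq_zero [Nonempty V] (hc : ∀ x y, 0 ≤ c x y)
    (hconn : ∀ x y : V, Relation.ReflTransGen (fun a b => 0 < c a b) x y) {ω u : V → ℝ}
    (hω : ∀ x, 0 < ω x) (h0 : weightedEnergy c ω (u / ω) = 0) : ∃ a : ℝ, u = a • ω := by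
  obtain ⟨x₀⟩ := ‹Nonempty V›
  have hconst : ∀ x, (u / ω) x = (u / ω) x₀ := fun x => by
    induction hconn x₀ x with
    | refl => rfl
    | tail _ hab ih => exact (eq_of_weightedEnergy_eq_zero hc hω h0 hab).symm.trans ih
  refine ⟨(u / ω) x₀, funext fun x => ?_⟩
  rw [Pi.smul_apply, smul_eq_mul, ← hconst x, Pi.div_apply, div_mul_cancel₀ _ (hω x).ne']

end

theorem stmt5_general {V : Type*} [Fintype V] [Nonempty V]
    (c : V → V → ℝ) (q ω : V → ℝ) (lam : ℝ)
    -- Γ is a finite connected network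
    (hc_symm : ∀ x y, c x y = c y x)
    (hc_nonneg : ∀ x y, 0 ≤ c x y)
    (hconn : ∀ x y : V, Relation.ReflTransGen (fun a b => 0 < c a b) x y)
    -- ω is a unit weight
    (hω_pos : ∀ x, 0 < ω x)
    (hω_unit : ∑ x, (ω x) ^ 2 = 1) :
    -- L_q is (λ,ω)-elliptic ↔ λ ≥ 0 and q = q_ω + λ
    ((∀ u v : V → ℝ, ip (fun x => lap c u x + q x * u x) v
        = ip u (fun x => lap c v x + q x * v x)) ∧
     (∀ u : V → ℝ, 0 ≤ ip (fun x => lap c u x + q x * u x) u) ∧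
     ((fun x => lap c ω x + q x * ω x) = lam • ω) ∧
     (∀ (μ : ℝ) (u : V → ℝ), u ≠ 0 →
        (fun x => lap c u x + q x * u x) = μ • u → lam ≤ μ) ∧
     (∀ u : V → ℝ, (fun x => lap c u x + q x * u x) = lam • u → ∃ a : ℝ, u = a • ω))
    ↔ (0 ≤ lam ∧ q = fun x => -(lap c ω x) / ω x + lam) := by
  have hω : ∀ x, ω x ≠ 0 := fun x => (hω_pos x).ne'
  have hE := weightedEnergy_nonneg hc_nonneg fun x => (hω_pos x).le
  constructor
  · rintro ⟨-, hpos, heig, -, -⟩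
    refine ⟨?_, (schrodinger_eq_smul_iff hω).mp heig⟩
    have hωω : ip ω ω = 1 := by simpa only [ip, sq] using hω_unit
    simpa only [heig, ip_smul_left, hωω, mul_one] using hpos ω
  · rintro ⟨hlam, rfl⟩
    refine ⟨ip_schrodinger_comm hc_symm _, fun u => ?_, (schrodinger_eq_smul_iff hω).mpr rfl,
      fun μ u hu h => ?_, fun u h => ?_⟩
    · refine le_of_le_of_eq ?_ (ip_schrodinger_groundPotential_add_self hc_symm hω lam u).symm
      exact add_nonneg (by linarith [hE (u / ω)]) (mul_nonneg hlam (ip_self_nonneg u))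
    · have hμ := weightedEnergy_eq_of_schrodinger_eq_smul hc_symm hω h
      nlinarith [hE (u / ω), ip_self_pos hu]
    · have h0 := weightedEnergy_eq_of_schrodinger_eq_smul hc_symm hω h
      rw [sub_self, zero_mul] at h0
      exact exists_eq_smul_of_weightedEnergy_eq_zero hc_nonneg hconn hω_pos (by linarith)

/-- The Schrödinger operator `L_q(u) = L(u) + q·u` on a finite connected network is
`(λ,ω)`-elliptic iff `q = q_ω + λ` with `λ ≥ 0`, where `q_ω = −L(ω)/ω`. -/
theorem stmt5 {V : Type*} [Fintype V] [Nonempty V]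
    (c : V → V → ℝ) (q ω : V → ℝ) (lam : ℝ)
    -- Γ is a finite connected network
    (hc_symm : ∀ x y, c x y = c y x)
    (hc_nonneg : ∀ x y, 0 ≤ c x y)
    (hc_diag : ∀ x, c x x = 0)
    (hconn : ∀ x y : V, Relation.ReflTransGen (fun a b => 0 < c a b) x y)
    -- ω is a unit weight
    (hω_pos : ∀ x, 0 < ω x)
    (hω_unit : ∑ x, (ω x) ^ 2 = 1) :
    -- L_q is (λ,ω)-elliptic ↔ λ ≥ 0 and q = q_ω + λ
    ((∀ u v : V → ℝ, ip (fun x => lap c u x + q x * u x) v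
        = ip u (fun x => lap c v x + q x * v x)) ∧
     (∀ u : V → ℝ, 0 ≤ ip (fun x => lap c u x + q x * u x) u) ∧
     ((fun x => lap c ω x + q x * ω x) = lam • ω) ∧
     (∀ (μ : ℝ) (u : V → ℝ), u ≠ 0 →
        (fun x => lap c u x + q x * u x) = μ • u → lam ≤ μ) ∧
     (∀ u : V → ℝ, (fun x => lap c u x + q x * u x) = lam • u → ∃ a : ℝ, u = a • ω))
    ↔ (0 ≤ lam ∧ q = fun x => -(lap c ω x) / ω x + lam) :=
  stmt5_general c q ω lam hc_symm hc_nonneg hconn hω_pos hω_unit
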